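/- arXiv:0812.0431 — 2 statements merged into one kernel-verified Lean document; each statement's English description precedes it below -/
import Mathlib

section
/- Let p_n/q_n and s_n/t_n be the convergents of irrational numbers α, θ ∈ (0,1) respectively, where α ≡ 2θ (mod 1). For each n ≥ 4, there exists an even integer L = 2m among t_{n-1}, t_n, and t_n − t_{n-1}, and an integer N ≥ 0, such that |2m·θ − N| < |2y·θ − x| for all integers x ≥ 0 and 0 < y < m. -/
/-- The Gauss-map orbit of θ. -/
noncomputable def cfFrac (θ : ℝ) : ℕ → ℝ
  | 0 => θ
  | n + 1 => Int.fract (1 / cfFrac θ n)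

/-- The n-th partial quotient a_n (for n ≥ 1) of the continued fraction of θ ∈ (0,1). -/
noncomputable def cfA (θ : ℝ) (n : ℕ) : ℕ := ⌊1 / cfFrac θ (n - 1)⌋₊

/-- The denominators q_n of the continued-fraction convergents of θ. -/
noncomputable def cfQden (θ : ℝ) : ℕ → ℕ
  | 0 => 1
  | 1 => cfA θ 1
  | n + 2 => cfA θ (n + 2) * cfQden θ (n + 1) + cfQden θ n

/-- θ is of David type if log a_n = O(√n). -/
def IsDavidType (θ : ℝ) : Prop :=
  ∃ C > (0 : ℝ), ∀ᶠ n : ℕ in Filter.atTop, Real.log (cfA θ n) ≤ C * Real.sqrt n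

/-- numerators -/
noncomputable def cfSnum (θ : ℝ) : ℕ → ℕ
  | 0 => 0
  | 1 => 1
  | n + 2 => cfA θ (n + 2) * cfSnum θ (n + 1) + cfSnum θ n

/-- product of Gauss orbit -/
noncomputable def cfP (θ : ℝ) (k : ℕ) : ℝ := ∏ j ∈ Finset.range (k+1), cfFrac θ j

/-- error -/
noncomputable def cfE (θ : ℝ) (k : ℕ) : ℝ := (cfQden θ k : ℝ) * θ - (cfSnum θ k : ℝ)

section facts
variable {θ : ℝ} (hθ : θ ∈ Set.Ioo (0:ℝ) 1) (hirr : Irrational θ)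
include hθ hirr

lemma cfFrac_key : ∀ k, cfFrac θ k ∈ Set.Ioo (0:ℝ) 1 ∧ Irrational (cfFrac θ k) := by
  intro k
  induction k with
  | zero => exact ⟨hθ, hirr⟩
  | succ n ih =>
    obtain ⟨⟨h0, _⟩, hi⟩ := ih
    have hinv : Irrational (1 / cfFrac θ n) := by
      simpa [one_div] using hi.inv
    have hfr : Irrational (cfFrac θ (n+1)) := by
      show Irrational (Int.fract (1 / cfFrac θ n))
      unfold Int.fract
      exact hinv.sub_intCast _
    refine ⟨⟨?_, ?_⟩, hfr⟩
    · rcases lt_or_eq_of_le (Int.fract_nonneg (1 / cfFrac θ n)) with h | h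
      · exact h
      · exfalso; exact hfr.ne_rat 0 (by simpa [cfFrac] using h.symm)
    · exact Int.fract_lt_one _

lemma cfFrac_pos (k : ℕ) : 0 < cfFrac θ k := (cfFrac_key hθ hirr k).1.1
lemma cfFrac_lt_one (k : ℕ) : cfFrac θ k < 1 := (cfFrac_key hθ hirr k).1.2

lemma cfA_inv_eq (k : ℕ) : 1 / cfFrac θ k = (cfA θ (k+1) : ℝ) + cfFrac θ (k+1) := by
  have hpos : 0 < cfFrac θ k := cfFrac_pos hθ hirr k
  have h0 : (0:ℝ) ≤ 1 / cfFrac θ k := by positivity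
  have : (cfA θ (k+1) : ℝ) = ((⌊1 / cfFrac θ k⌋₊ : ℤ) : ℝ) := by
    simp [cfA]
  rw [this, Int.natCast_floor_eq_floor h0]
  have : cfFrac θ (k+1) = Int.fract (1 / cfFrac θ k) := rfl
  rw [this, Int.fract]
  ring

lemma one_le_cfA (k : ℕ) : 1 ≤ cfA θ (k+1) := by
  have hpos : 0 < cfFrac θ k := cfFrac_pos hθ hirr k
  have hlt : cfFrac θ k < 1 := cfFrac_lt_one hθ hirr k
  have : (1:ℝ) ≤ 1 / cfFrac θ k := by
    rw [le_div_iff₀ hpos]; linarith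
  have := Nat.le_floor (by exact_mod_cast this : ((1:ℕ):ℝ) ≤ 1 / cfFrac θ k)
  simpa [cfA] using this

lemma cfP_pos (k : ℕ) : 0 < cfP θ k := by
  apply Finset.prod_pos
  intro j _
  exact cfFrac_pos hθ hirr j

omit hθ hirr in
lemma cfP_succ (k : ℕ) : cfP θ (k+1) = cfP θ k * cfFrac θ (k+1) := by
  simp [cfP, Finset.prod_range_succ]

lemma cfP_lt (k : ℕ) : cfP θ (k+1) < cfP θ k := by
  rw [cfP_succ]
  
  have := cfP_pos hθ hirr k
  nlinarith [cfFrac_lt_one hθ hirr (k+1), cfFrac_pos hθ hirr (k+1)]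

lemma cfE_eq : ∀ k, cfE θ k = (-1:ℝ)^k * cfP θ k := by
  intro k
  induction k using Nat.strong_induction_on with
  | _ k ih =>
    match k with
    | 0 => simp [cfE, cfP, cfQden, cfSnum, cfFrac]
    | 1 =>
      have h := cfA_inv_eq hθ hirr 0
      have hpos : 0 < cfFrac θ 0 := cfFrac_pos hθ hirr 0
      have h1 : 1 = (cfA θ 1 : ℝ) * cfFrac θ 0 + cfFrac θ 1 * cfFrac θ 0 := by
        field_simp at h
        linarith [h]
      show (cfQden θ 1 : ℝ) * θ - (cfSnum θ 1 : ℝ) = _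
      have hq : cfQden θ 1 = cfA θ 1 := rfl
      have hs : cfSnum θ 1 = 1 := rfl
      have hθ0 : cfFrac θ 0 = θ := rfl
      rw [hq, hs, cfP]
      simp [Finset.prod_range_succ, hθ0] at *
      nlinarith [h1]
    | (k+2) =>
      have ih1 := ih (k+1) (by omega)
      have ih0 := ih k (by omega)
      have hrec : cfE θ (k+2) = (cfA θ (k+2) : ℝ) * cfE θ (k+1) + cfE θ k := by
        show (cfQden θ (k+2) : ℝ) * θ - (cfSnum θ (k+2) : ℝ) = _
        have hq : cfQden θ (k+2) = cfA θ (k+2) * cfQden θ (k+1) + cfQden θ k := rfl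
        have hs : cfSnum θ (k+2) = cfA θ (k+2) * cfSnum θ (k+1) + cfSnum θ k := rfl
        rw [hq, hs]
        push_cast
        unfold cfE
        ring
      have hkey := cfA_inv_eq hθ hirr (k+1)
      have hpos : 0 < cfFrac θ (k+1) := cfFrac_pos hθ hirr (k+1)
      have hkey2 : 1 = ((cfA θ (k+2) : ℝ) + cfFrac θ (k+2)) * cfFrac θ (k+1) := by
        field_simp at hkey
        linarith [hkey]
      rw [hrec, ih1, ih0, cfP_succ (k+1), cfP_succ k]
      linear_combination (((-1:ℝ))^k * cfP θ k) * hkey2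

lemma abs_cfE (k : ℕ) : |cfE θ k| = cfP θ k := by
  rw [cfE_eq hθ hirr, abs_mul, abs_pow, abs_neg, abs_one, one_pow, one_mul,
    abs_of_pos (cfP_pos hθ hirr k)]

lemma abs_cfE_sub (k : ℕ) : |cfE θ (k+1) - cfE θ k| = cfP θ k + cfP θ (k+1) := by
  rw [cfE_eq hθ hirr, cfE_eq hθ hirr]
  have h : (-1:ℝ)^(k+1) * cfP θ (k+1) - (-1)^k * cfP θ k
      = (-1)^(k+1) * (cfP θ (k+1) + cfP θ k) := by ring
  rw [h, abs_mul, abs_pow, abs_neg, abs_one, one_pow, one_mul,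
    abs_of_pos (by linarith [cfP_pos hθ hirr k, cfP_pos hθ hirr (k+1)])]
  ring

lemma cfQden_pos : ∀ k, 1 ≤ cfQden θ k := by
  intro k
  induction k using Nat.strong_induction_on with
  | _ k ih =>
    match k with
    | 0 => simp [cfQden]
    | 1 => simpa [cfQden] using one_le_cfA hθ hirr 0
    | (k+2) =>
      have := ih (k+1) (by omega)
      show 1 ≤ cfA θ (k+2) * cfQden θ (k+1) + cfQden θ k
      have := ih k (by omega)
      omega

lemma cfQden_mono (k : ℕ) : cfQden θ k ≤ cfQden θ (k+1) := by
  match k with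
  | 0 => simpa [cfQden] using one_le_cfA hθ hirr 0
  | (k+1) =>
    show cfQden θ (k+1) ≤ cfA θ (k+2) * cfQden θ (k+1) + cfQden θ k
    have h1 := one_le_cfA hθ hirr (k+1)
    nlinarith [cfQden_pos hθ hirr k, cfQden_pos hθ hirr (k+1)]

lemma cfQden_strict (k : ℕ) : cfQden θ (k+1) < cfQden θ (k+2) := by
  show cfQden θ (k+1) < cfA θ (k+2) * cfQden θ (k+1) + cfQden θ k
  have h1 := one_le_cfA hθ hirr (k+1)
  nlinarith [cfQden_pos hθ hirr k, cfQden_pos hθ hirr (k+1)]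

lemma cfSnum_mono (k : ℕ) : cfSnum θ k ≤ cfSnum θ (k+1) := by
  match k with
  | 0 => simp [cfSnum]
  | (k+1) =>
    show cfSnum θ (k+1) ≤ cfA θ (k+2) * cfSnum θ (k+1) + cfSnum θ k
    have h1 := one_le_cfA hθ hirr (k+1)
    nlinarith

omit hθ hirr in
lemma cfDet : ∀ k, (cfSnum θ (k+1) : ℤ) * (cfQden θ k : ℤ) - (cfSnum θ k : ℤ) * (cfQden θ (k+1) : ℤ) = (-1)^k := by
  intro k
  induction k with
  | zero => simp [cfSnum, cfQden]
  | succ n ih =>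
    have hq : cfQden θ (n+2) = cfA θ (n+2) * cfQden θ (n+1) + cfQden θ n := rfl
    have hs : cfSnum θ (n+2) = cfA θ (n+2) * cfSnum θ (n+1) + cfSnum θ n := rfl
    rw [hq, hs]
    push_cast
    ring_nf
    ring_nf at ih
    linarith [ih]
end facts

lemma abs_add_same_sign (a b : ℝ) (h : 0 ≤ a * b) : |a + b| = |a| + |b| := by
  rcases le_or_gt 0 a with ha | ha <;> rcases le_or_gt 0 b with hb | hb
  · rw [abs_of_nonneg ha, abs_of_nonneg hb, abs_of_nonneg (by linarith)]
  · have ha0 : a = 0 := by nlinarith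
    simp [ha0]
  · have hb0 : b = 0 := by nlinarith
    simp [hb0]
  · rw [abs_of_neg ha, abs_of_neg hb, abs_of_neg (by linarith)]; ring

lemma master_abstract (P0 P1 θ : ℝ) (T0 T1 S0 S1 p q : ℤ)
    (hP0 : 0 < P0) (hP1 : 0 < P1) (hPlt : P1 < P0)
    (hdet : S1 * T0 - S0 * T1 = 1 ∨ S1 * T0 - S0 * T1 = -1)
    (hE0abs : |(T0:ℝ)*θ - S0| = P0) (hE1abs : |(T1:ℝ)*θ - S1| = P1)
    (hEsign : ((T0:ℝ)*θ - (S0:ℝ)) * ((T1:ℝ)*θ - (S1:ℝ)) < 0)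
    (hT0pos : 1 ≤ T0) (hT01 : T0 ≤ T1)
    (hq0 : 0 < q) (hqlt : q < T1)
    (h1 : ¬(q = T0 ∧ p = S0))
    (h2 : ¬(q = T1 - T0 ∧ p = S1 - S0)) :
    P0 + P1 < |(q:ℝ)*θ - (p:ℝ)| := by
  obtain ⟨D, hD1, hdetD⟩ : ∃ D:ℤ, D*D = 1 ∧ S1*T0 - S0*T1 = D := by
    rcases hdet with h | h
    · exact ⟨1, by ring, h⟩
    · exact ⟨-1, by ring, h⟩
  obtain ⟨x, hxdef⟩ : ∃ x:ℤ, x = D*(T0*p - S0*q) := ⟨_, rfl⟩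
  obtain ⟨y, hydef⟩ : ∃ y:ℤ, y = D*(S1*q - T1*p) := ⟨_, rfl⟩
  have hq : x*T1 + y*T0 = q := by
    linear_combination T1*hxdef + T0*hydef + (D*q)*hdetD + q*hD1
  have hp : x*S1 + y*S0 = p := by
    linear_combination S1*hxdef + S0*hydef + (D*p)*hdetD + p*hD1
  have hE : (q:ℝ)*θ - (p:ℝ) = (x:ℝ)*((T1:ℝ)*θ - S1) + (y:ℝ)*((T0:ℝ)*θ - S0) := by
    rw [← hq, ← hp]
    push_cast
    ring
  rcases eq_or_ne x 0 with hx0 | hx0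
  · rw [hx0] at hq hp
    simp only [zero_mul, zero_add] at hq hp
    have hy1 : 1 ≤ y := by nlinarith
    have hy2 : 2 ≤ y := by
      rcases eq_or_lt_of_le hy1 with h | h
      · exfalso; apply h1
        rw [← h, one_mul] at hq hp
        exact ⟨hq.symm, hp.symm⟩
      · omega
    rw [hE, hx0]
    push_cast
    rw [zero_mul, zero_add, abs_mul, hE0abs]
    have h2y : (2:ℝ) ≤ (y:ℝ) := by exact_mod_cast hy2
    rw [abs_of_pos (by linarith : (0:ℝ) < (y:ℝ))]
    nlinarith
  · rcases eq_or_ne y 0 with hy0 | hy0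
    · rw [hy0] at hq
      simp only [zero_mul, add_zero] at hq
      exfalso
      rcases lt_trichotomy x 0 with h | h | h
      · nlinarith
      · exact hx0 h
      · nlinarith
    · have hxy : x * y < 0 := by
        rcases lt_trichotomy x 0 with hxneg | h | hxpos
        · rcases lt_trichotomy y 0 with hyneg | h | hypos
          · exfalso; nlinarith
          · exact absurd h hy0
          · exact mul_neg_of_neg_of_pos hxneg hypos
        · exact absurd h hx0
        · rcases lt_trichotomy y 0 with hyneg | h | hypos
          · exact mul_neg_of_pos_of_neg hxpos hyneg
          · exact absurd h hy0
          · exfalso; nlinarith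
      have hxyR : ((x:ℝ)) * ((y:ℝ)) < 0 := by exact_mod_cast hxy
      have hsign : 0 ≤ ((x:ℝ)*((T1:ℝ)*θ - S1)) * ((y:ℝ)*((T0:ℝ)*θ - S0)) := by
        nlinarith
      rw [hE, abs_add_same_sign _ _ hsign, abs_mul, abs_mul, hE0abs, hE1abs]
      have haxZ : (1:ℤ) ≤ |x| := by
        have := abs_pos.mpr hx0; omega
      have hayZ : (1:ℤ) ≤ |y| := by
        have := abs_pos.mpr hy0; omega
      have hax : (1:ℝ) ≤ |(x:ℝ)| := by
        rw [← Int.cast_abs]; exact_mod_cast haxZ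
      have hay : (1:ℝ) ≤ |(y:ℝ)| := by
        rw [← Int.cast_abs]; exact_mod_cast hayZ
      have hne11 : 2 ≤ |x| ∨ 2 ≤ |y| := by
        by_contra hc
        push_neg at hc
        obtain ⟨hcx, hcy⟩ := hc
        have hxb := abs_lt.mp hcx
        have hyb := abs_lt.mp hcy
        have hx1 : x = 1 ∨ x = -1 := by omega
        have hy1 : y = 1 ∨ y = -1 := by omega
        rcases hx1 with hx' | hx' <;> rcases hy1 with hy' | hy'
        · rw [hx', hy'] at hxy; norm_num at hxy
        · apply h2
          rw [hx', hy'] at hq hp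
          constructor <;> omega
        · rw [hx', hy'] at hq
          omega
        · rw [hx', hy'] at hxy; norm_num at hxy
      rcases hne11 with h | h
      · have h2x : (2:ℝ) ≤ |(x:ℝ)| := by
          rw [← Int.cast_abs]; exact_mod_cast h
        nlinarith
      · have h2y : (2:ℝ) ≤ |(y:ℝ)| := by
          rw [← Int.cast_abs]; exact_mod_cast h
        nlinarith

section assemble
variable {θ : ℝ} (hθ : θ ∈ Set.Ioo (0:ℝ) 1) (hirr : Irrational θ)
include hθ hirr

lemma masterθ (j : ℕ) (p q : ℤ) (hq0 : 0 < q) (hqlt : q < (cfQden θ (j+1) : ℤ))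
    (h1 : ¬(q = (cfQden θ j : ℤ) ∧ p = (cfSnum θ j : ℤ)))
    (h2 : ¬(q = (cfQden θ (j+1):ℤ) - (cfQden θ j:ℤ) ∧
            p = (cfSnum θ (j+1):ℤ) - (cfSnum θ j:ℤ))) :
    cfP θ j + cfP θ (j+1) < |(q:ℝ)*θ - (p:ℝ)| := by
  have hsq : ((-1:ℝ)^j) * ((-1:ℝ)^(j+1)) = -1 := by
    rw [pow_succ, ← mul_assoc, ← mul_pow]; norm_num
  have e0 := cfE_eq hθ hirr j
  have e1 := cfE_eq hθ hirr (j+1)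
  unfold cfE at e0 e1
  apply master_abstract (cfP θ j) (cfP θ (j+1)) θ
      (cfQden θ j) (cfQden θ (j+1)) (cfSnum θ j) (cfSnum θ (j+1)) p q
      (cfP_pos hθ hirr j) (cfP_pos hθ hirr (j+1)) (cfP_lt hθ hirr j)
  · -- det
    have h := cfDet (θ := θ) j
    rcases Nat.even_or_odd j with hj | hj
    · left; rw [h, hj.neg_one_pow]
    · right; rw [h, hj.neg_one_pow]
  · have := abs_cfE hθ hirr j
    unfold cfE at this
    push_cast
    exact this
  · have := abs_cfE hθ hirr (j+1)
    unfold cfE at this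
    push_cast
    exact this
  · -- sign
    have hprod : ((cfQden θ j:ℝ)*θ - (cfSnum θ j:ℝ)) *
        ((cfQden θ (j+1):ℝ)*θ - (cfSnum θ (j+1):ℝ))
        = -(cfP θ j * cfP θ (j+1)) := by
      rw [e0, e1]
      linear_combination (cfP θ j * cfP θ (j+1)) * hsq
    push_cast
    rw [hprod]
    have := cfP_pos hθ hirr j
    have := cfP_pos hθ hirr (j+1)
    nlinarith
  · exact_mod_cast cfQden_pos hθ hirr j
  · exact_mod_cast cfQden_mono hθ hirr j
  · exact hq0
  · exact hqlt
  · exact h1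
  · exact h2

lemma abs_diff_val (j : ℕ) :
    |((cfQden θ (j+1):ℝ) - (cfQden θ j:ℝ))*θ - ((cfSnum θ (j+1):ℝ) - (cfSnum θ j:ℝ))|
      = cfP θ j + cfP θ (j+1) := by
  have h := abs_cfE_sub hθ hirr j
  unfold cfE at h
  rw [← h]
  ring_nf

lemma rhs_ge (j : ℕ) (p q : ℤ) (hq0 : 0 < q) (hqlt : q < (cfQden θ (j+1) : ℤ))
    (h1 : ¬(q = (cfQden θ j : ℤ) ∧ p = (cfSnum θ j : ℤ))) :
    cfP θ j + cfP θ (j+1) ≤ |(q:ℝ)*θ - (p:ℝ)| := by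
  by_cases h2 : q = (cfQden θ (j+1):ℤ) - (cfQden θ j:ℤ) ∧
      p = (cfSnum θ (j+1):ℤ) - (cfSnum θ j:ℤ)
  · obtain ⟨hq', hp'⟩ := h2
    have : (q:ℝ)*θ - (p:ℝ)
        = ((cfQden θ (j+1):ℝ) - (cfQden θ j:ℝ))*θ - ((cfSnum θ (j+1):ℝ) - (cfSnum θ j:ℝ)) := by
      have hqR : (q:ℝ) = (cfQden θ (j+1):ℝ) - (cfQden θ j:ℝ) := by exact_mod_cast hq'
      have hpR : (p:ℝ) = (cfSnum θ (j+1):ℝ) - (cfSnum θ j:ℝ) := by exact_mod_cast hp'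
      rw [hqR, hpR]
    rw [this, abs_diff_val hθ hirr j]
  · exact le_of_lt (masterθ hθ hirr j p q hq0 hqlt h1 h2)

lemma rhs_gt (j : ℕ) (p q : ℤ) (hq0 : 0 < q) (hqlt : q < (cfQden θ (j+1) : ℤ)) :
    cfP θ (j+1) < |(q:ℝ)*θ - (p:ℝ)| := by
  by_cases h1 : q = (cfQden θ j : ℤ) ∧ p = (cfSnum θ j : ℤ)
  · obtain ⟨hq', hp'⟩ := h1
    have : (q:ℝ)*θ - (p:ℝ) = (cfQden θ j:ℝ)*θ - (cfSnum θ j:ℝ) := by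
      have hqR : (q:ℝ) = (cfQden θ j:ℝ) := by exact_mod_cast hq'
      have hpR : (p:ℝ) = (cfSnum θ j:ℝ) := by exact_mod_cast hp'
      rw [hqR, hpR]
    rw [this]
    have h := abs_cfE hθ hirr j
    unfold cfE at h
    rw [h]
    exact cfP_lt hθ hirr j
  · have := rhs_ge hθ hirr j p q hq0 hqlt h1
    have := cfP_pos hθ hirr j
    linarith

end assemble

/-- For each n ≥ 4 there is an even integer L = 2m among t_{n-1}, t_n, t_n - t_{n-1}
(the convergent denominators of θ) and an integer N ≥ 0 such that
|2mθ - N| < |2yθ - x| for all integers x ≥ 0 and 0 < y < m. -/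
theorem even_best_denominator (θ α : ℝ) (hθ : θ ∈ Set.Ioo (0:ℝ) 1) (hθirr : Irrational θ)
    (hα : α ∈ Set.Ioo (0:ℝ) 1) (hαirr : Irrational α)
    (hmod : α = 2 * θ ∨ α = 2 * θ - 1) :
    ∀ n : ℕ, 4 ≤ n → ∃ m : ℕ, 0 < m ∧
      (2 * m = cfQden θ (n - 1) ∨ 2 * m = cfQden θ n ∨
        (2 * m : ℤ) = (cfQden θ n : ℤ) - (cfQden θ (n - 1) : ℤ)) ∧
      ∃ N : ℤ, 0 ≤ N ∧ ∀ x y : ℤ, 0 ≤ x → 0 < y → y < (m : ℤ) →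
        |2 * (m : ℝ) * θ - (N : ℝ)| < |2 * (y : ℝ) * θ - (x : ℝ)| := by
  intro n hn
  obtain ⟨k, rfl⟩ : ∃ k, n = k + 4 := ⟨n - 4, by omega⟩
  have hidx : k + 4 - 1 = k + 3 := by omega
  rw [hidx]
  have ht3pos := cfQden_pos hθ hθirr (k+3)
  have ht4pos := cfQden_pos hθ hθirr (k+4)
  have hstrict : cfQden θ (k+3) < cfQden θ (k+4) := cfQden_strict hθ hθirr (k+2)
  rcases Nat.even_or_odd (cfQden θ (k+3)) with he3 | ho3
  · -- Case 1: t_{n-1} even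
    obtain ⟨m, hm⟩ := he3
    have h2m : 2*m = cfQden θ (k+3) := by omega
    refine ⟨m, by omega, Or.inl h2m, (cfSnum θ (k+3) : ℤ), by positivity, ?_⟩
    intro x y hx hy hym
    have hL : 2*(m:ℝ)*θ - ((cfSnum θ (k+3):ℤ):ℝ) = (cfQden θ (k+3):ℝ)*θ - (cfSnum θ (k+3):ℝ) := by
      have : ((cfQden θ (k+3):ℕ):ℝ) = 2*(m:ℝ) := by exact_mod_cast h2m.symm
      rw [this]
      push_cast
      ring
    rw [hL]
    have habs := abs_cfE hθ hθirr (k+3)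
    unfold cfE at habs
    rw [habs]
    have hRHS : 2*(y:ℝ)*θ - (x:ℝ) = ((2*y : ℤ):ℝ)*θ - ((x:ℤ):ℝ) := by push_cast; ring
    rw [hRHS]
    have hqlt : (2*y:ℤ) < (cfQden θ (k+3) : ℤ) := by omega
    exact rhs_gt hθ hθirr (k+2) x (2*y) (by omega) hqlt
  · rcases Nat.even_or_odd (cfQden θ (k+4)) with he4 | ho4
    · -- Case 2: t_n even
      obtain ⟨m, hm⟩ := he4
      have h2m : 2*m = cfQden θ (k+4) := by omega
      refine ⟨m, by omega, Or.inr (Or.inl h2m), (cfSnum θ (k+4) : ℤ), by positivity, ?_⟩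
      intro x y hx hy hym
      have hL : 2*(m:ℝ)*θ - ((cfSnum θ (k+4):ℤ):ℝ) = (cfQden θ (k+4):ℝ)*θ - (cfSnum θ (k+4):ℝ) := by
        have : ((cfQden θ (k+4):ℕ):ℝ) = 2*(m:ℝ) := by exact_mod_cast h2m.symm
        rw [this]
        push_cast
        ring
      rw [hL]
      have habs := abs_cfE hθ hθirr (k+4)
      unfold cfE at habs
      rw [habs]
      have hRHS : 2*(y:ℝ)*θ - (x:ℝ) = ((2*y : ℤ):ℝ)*θ - ((x:ℤ):ℝ) := by push_cast; ring
      rw [hRHS]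
      have hge : cfP θ (k+3) + cfP θ (k+4) ≤ |((2*y:ℤ):ℝ)*θ - ((x:ℤ):ℝ)| := by
        have hqlt : (2*y:ℤ) < (cfQden θ (k+4) : ℤ) := by omega
        apply rhs_ge hθ hθirr (k+3) x (2*y) (by omega) hqlt
        rintro ⟨hq', -⟩
        obtain ⟨r, hr⟩ := ho3
        have : (cfQden θ (k+3) : ℤ) = 2*r + 1 := by exact_mod_cast hr
        omega
      have := cfP_pos hθ hθirr (k+3)
      linarith
    · -- Case 3: both odd
      have heL : Even (cfQden θ (k+4) - cfQden θ (k+3)) := Nat.Odd.sub_odd ho4 ho3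
      obtain ⟨m, hm⟩ := heL
      have h2m : (2*m : ℤ) = (cfQden θ (k+4) : ℤ) - (cfQden θ (k+3) : ℤ) := by omega
      refine ⟨m, by omega, Or.inr (Or.inr h2m),
        (cfSnum θ (k+4) : ℤ) - (cfSnum θ (k+3) : ℤ), ?_, ?_⟩
      · have hsm : cfSnum θ (k+3) ≤ cfSnum θ (k+4) := cfSnum_mono hθ hθirr (k+3)
        omega
      intro x y hx hy hym
      have hL : 2*(m:ℝ)*θ - ((cfSnum θ (k+4):ℝ) - (cfSnum θ (k+3):ℝ))
          = ((cfQden θ (k+4):ℝ) - (cfQden θ (k+3):ℝ))*θ - ((cfSnum θ (k+4):ℝ) - (cfSnum θ (k+3):ℝ)) := by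
        have : (cfQden θ (k+4):ℝ) - (cfQden θ (k+3):ℝ) = 2*(m:ℝ) := by exact_mod_cast h2m.symm
        rw [this]
      have habsL : |2*(m:ℝ)*θ - ((((cfSnum θ (k+4) : ℤ) - (cfSnum θ (k+3) : ℤ)) : ℤ):ℝ)|
          = cfP θ (k+3) + cfP θ (k+4) := by
        push_cast
        rw [hL]
        exact abs_diff_val hθ hθirr (k+3)
      rw [habsL]
      have hRHS : 2*(y:ℝ)*θ - (x:ℝ) = ((2*y : ℤ):ℝ)*θ - ((x:ℤ):ℝ) := by push_cast; ring
      rw [hRHS]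
      have hqlt : (2*y:ℤ) < (cfQden θ (k+4) : ℤ) := by omega
      apply masterθ hθ hθirr (k+3) x (2*y) (by omega) hqlt
      · rintro ⟨hq', -⟩
        obtain ⟨r, hr⟩ := ho3
        have : (cfQden θ (k+3) : ℤ) = 2*r + 1 := by exact_mod_cast hr
        omega
      · rintro ⟨hq', -⟩
        have hq'' : (2*y:ℤ) = (cfQden θ (k+4):ℤ) - (cfQden θ (k+3):ℤ) := hq'
        omega
end

section
/- For every measurable set E contained in the closed unit disk, the Euclidean area of Φ⁻¹(E) is at most C·(area E)^{1/2} for some universal constant C, where Φ(z) = z². Moreover, for fixed Euclidean area of E, the Euclidean area of Φ⁻¹(E) is maximized when Φ⁻¹(E) is a Euclidean disk centered at the origin. -/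
set_option maxHeartbeats 1000000

open MeasureTheory Metric Set Complex

lemma line_null : volume {z : ℂ | z.im = 0} = 0 := by
  have h : {z : ℂ | z.im = 0} = Complex.measurableEquivRealProd ⁻¹' (univ ×ˢ {0}) := by
    ext z
    simp [Complex.measurableEquivRealProd, Complex.equivRealProd, eq_comm]
  rw [h, Complex.volume_preserving_equiv_real_prod.measure_preimage
    ((MeasurableSet.univ.prod (measurableSet_singleton 0)).nullMeasurableSet),
    Measure.volume_eq_prod, Measure.prod_prod]
  simp

lemma halve {T : Set ℂ} (hT : MeasurableSet T) (hsymm : ∀ z : ℂ, z ∈ T ↔ -z ∈ T)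
    (g : ℂ → ENNReal) (hgeven : ∀ z, g (-z) = g z) :
    ∫⁻ z in T, g z = 2 * ∫⁻ z in T ∩ {z : ℂ | 0 < z.im}, g z := by
  have hneg : MeasurePreserving (fun z : ℂ => -z) volume volume :=
    Measure.measurePreserving_neg _
  have hemb : MeasurableEmbedding (fun z : ℂ => -z) :=
    (MeasurableEquiv.neg ℂ).measurableEmbedding
  have hmp : MeasurableSet {z : ℂ | 0 < z.im} :=
    measurableSet_lt measurable_const Complex.measurable_im
  have hmn : MeasurableSet {z : ℂ | z.im < 0} :=
    measurableSet_lt Complex.measurable_im measurable_const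
  have himg : (fun z : ℂ => -z) '' (T ∩ {z : ℂ | 0 < z.im}) = T ∩ {z : ℂ | z.im < 0} := by
    ext z
    constructor
    · rintro ⟨w, ⟨hwT, hw⟩, rfl⟩
      exact ⟨(hsymm w).1 hwT, by simpa using hw⟩
    · rintro ⟨hzT, hz⟩
      exact ⟨-z, ⟨(hsymm z).1 hzT, by simpa using hz⟩, by simp⟩
  have h2 : ∫⁻ z in T ∩ {z : ℂ | 0 < z.im}, g z = ∫⁻ z in T ∩ {z : ℂ | z.im < 0}, g z := by
    rw [← himg, ← MeasurePreserving.setLIntegral_comp_emb hneg hemb g _]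
    exact setLIntegral_congr_fun (hT.inter hmp) (by
      intro z _; exact (hgeven z).symm)
  have hnull : volume (T ∩ {z : ℂ | z.im = 0}) = 0 :=
    measure_mono_null inter_subset_right line_null
  have hsplit : T = (T ∩ {z : ℂ | 0 < z.im}) ∪ (T ∩ {z : ℂ | z.im < 0}) ∪ (T ∩ {z : ℂ | z.im = 0}) := by
    ext z; simp only [mem_union, mem_inter_iff, mem_setOf_eq]
    constructor
    · intro hz; rcases lt_trichotomy z.im 0 with h|h|h
      · exact Or.inl (Or.inr ⟨hz, h⟩)
      · exact Or.inr ⟨hz, h⟩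
      · exact Or.inl (Or.inl ⟨hz, h⟩)
    · rintro ((⟨h,_⟩|⟨h,_⟩)|⟨h,_⟩) <;> exact h
  have hdisj : Disjoint (T ∩ {z : ℂ | 0 < z.im}) (T ∩ {z : ℂ | z.im < 0}) := by
    apply Set.disjoint_left.2
    rintro z ⟨_, h1⟩ ⟨_, h2⟩
    simp only [mem_setOf_eq] at h1 h2
    exact lt_asymm h1 h2
  calc ∫⁻ z in T, g z
      = ∫⁻ z in (T ∩ {z : ℂ | 0 < z.im}) ∪ (T ∩ {z : ℂ | z.im < 0}) ∪ (T ∩ {z : ℂ | z.im = 0}), g z := by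
        rw [← hsplit]
    _ = ∫⁻ z in (T ∩ {z : ℂ | 0 < z.im}) ∪ (T ∩ {z : ℂ | z.im < 0}), g z := by
        rw [lintegral_union (hT.inter (measurableSet_eq_fun Complex.measurable_im measurable_const))
          (by
            apply Set.disjoint_left.2
            rintro z (⟨_, h1⟩|⟨_, h1⟩) ⟨_, h2⟩ <;> simp only [mem_setOf_eq] at h1 h2 <;>
              simp [h2] at h1),
          setLIntegral_measure_zero _ _ hnull, add_zero]
    _ = (∫⁻ z in T ∩ {z : ℂ | 0 < z.im}, g z) + ∫⁻ z in T ∩ {z : ℂ | z.im < 0}, g z :=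
        lintegral_union (hT.inter hmn) hdisj
    _ = 2 * ∫⁻ z in T ∩ {z : ℂ | 0 < z.im}, g z := by rw [← h2]; ring

lemma lintegral_ball_normSq {ρ : ℝ} (hρ : 0 ≤ ρ) :
    ∫⁻ z in ball (0:ℂ) ρ, ENNReal.ofReal (normSq z) = ENNReal.ofReal (Real.pi * ρ^4 / 2) := by
  have hmns : Measurable (normSq : ℂ → ℝ) := Complex.continuous_normSq.measurable
  rw [lintegral_eq_lintegral_meas_lt _ (ae_of_all _ fun z => normSq_nonneg z) hmns.aemeasurable]
  have hmeas : ∀ t : ℝ, 0 < t → (volume.restrict (ball (0:ℂ) ρ)) {z | t < normSq z}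
      = ENNReal.ofReal (Real.pi * (ρ^2 - t)) := by
    intro t ht
    rw [Measure.restrict_apply (measurableSet_lt measurable_const hmns)]
    have hset : {z : ℂ | t < normSq z} ∩ ball (0:ℂ) ρ
        = ball (0:ℂ) ρ \ closedBall (0:ℂ) (Real.sqrt t) := by
      ext z
      simp only [mem_inter_iff, mem_setOf_eq, mem_diff, mem_ball, mem_closedBall,
        Complex.dist_eq, sub_zero, not_le]
      rw [show normSq z = ‖z‖ ^ 2 by rw [Complex.sq_norm]]
      constructor
      · rintro ⟨h1, h2⟩
        refine ⟨h2, ?_⟩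
        have := Real.sqrt_lt_sqrt ht.le h1
        rwa [Real.sqrt_sq (norm_nonneg z)] at this
      · rintro ⟨h1, h2⟩
        refine ⟨?_, h1⟩
        calc t = Real.sqrt t ^ 2 := (Real.sq_sqrt ht.le).symm
          _ < ‖z‖ ^ 2 := by
            exact pow_lt_pow_left₀ h2 (Real.sqrt_nonneg t) (by norm_num)
    rw [hset]
    by_cases hc : Real.sqrt t < ρ
    · rw [measure_diff (closedBall_subset_ball hc) measurableSet_closedBall.nullMeasurableSet
        (by rw [Complex.volume_closedBall]; exact ENNReal.mul_ne_top (by simp) ENNReal.coe_ne_top),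
        Complex.volume_ball, Complex.volume_closedBall]
      rw [← ENNReal.ofReal_pow (Real.sqrt_nonneg t), ← ENNReal.ofReal_pow hρ,
        Real.sq_sqrt ht.le]
      rw [show ((NNReal.pi : ENNReal)) = ENNReal.ofReal Real.pi by
        rw [← NNReal.coe_real_pi, ENNReal.ofReal_coe_nnreal]]
      rw [← ENNReal.ofReal_mul (by positivity), ← ENNReal.ofReal_mul ht.le,
        ← ENNReal.ofReal_sub _ (by positivity)]
      ring_nf
    · push_neg at hc
      have h1 : ball (0:ℂ) ρ \ closedBall (0:ℂ) (Real.sqrt t) = ∅ := by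
        apply diff_eq_empty.2
        exact ball_subset_closedBall.trans (closedBall_subset_closedBall hc)
      have h2 : ρ^2 - t ≤ 0 := by
        nlinarith [Real.sq_sqrt ht.le, Real.sqrt_nonneg t]
      rw [h1, ENNReal.ofReal_of_nonpos (by nlinarith [Real.pi_pos]), measure_empty]
  calc ∫⁻ t in Ioi (0:ℝ), (volume.restrict (ball (0:ℂ) ρ)) {z | t < normSq z}
      = ∫⁻ t in Ioi (0:ℝ), ENNReal.ofReal (Real.pi * (ρ^2 - t)) :=
        setLIntegral_congr_fun measurableSet_Ioi (fun t ht => hmeas t ht)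
    _ = (∫⁻ t in Ioc (0:ℝ) (ρ^2), ENNReal.ofReal (Real.pi * (ρ^2 - t)))
        + ∫⁻ t in Ioi (ρ^2), ENNReal.ofReal (Real.pi * (ρ^2 - t)) := by
        rw [← lintegral_union measurableSet_Ioi Ioc_disjoint_Ioi_same,
          Ioc_union_Ioi_eq_Ioi (by positivity)]
    _ = ∫⁻ t in Ioc (0:ℝ) (ρ^2), ENNReal.ofReal (Real.pi * (ρ^2 - t)) := by
        rw [setLIntegral_congr_fun measurableSet_Ioi (fun t (ht : ρ^2 < t) => by
          beta_reduce; rw [ENNReal.ofReal_of_nonpos (by nlinarith [Real.pi_pos])]), lintegral_zero, add_zero]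
    _ = ENNReal.ofReal (∫ t in Ioc (0:ℝ) (ρ^2), Real.pi * (ρ^2 - t)) := by
        rw [← ofReal_integral_eq_lintegral_ofReal]
        · exact (continuous_const.mul (continuous_const.sub continuous_id)).integrableOn_Ioc
        · filter_upwards [ae_restrict_mem measurableSet_Ioc] with t ht
          exact mul_nonneg Real.pi_pos.le (by linarith [ht.2])
    _ = ENNReal.ofReal (Real.pi * ρ^4 / 2) := by
        rw [← intervalIntegral.integral_of_le (by positivity)]
        rw [intervalIntegral.integral_const_mul]
        rw [intervalIntegral.integral_sub intervalIntegrable_const intervalIntegral.intervalIntegrable_id]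
        rw [intervalIntegral.integral_const, integral_id]
        simp only [smul_eq_mul]
        ring_nf

lemma bathtub {S : Set ℂ} (hS : MeasurableSet S) (hSH : S ⊆ {z : ℂ | 0 < z.im})
    (hSb : S ⊆ closedBall (0:ℂ) 1) :
    volume S ^ 2 ≤ ENNReal.ofReal Real.pi * ∫⁻ z in S, ENNReal.ofReal (normSq z) := by
  have hf : Measurable (fun z : ℂ => ENNReal.ofReal (normSq z)) :=
    ENNReal.measurable_ofReal.comp Complex.continuous_normSq.measurable
  have hSfin : volume S ≠ ⊤ := by
    refine ne_top_of_le_ne_top ?_ (measure_mono hSb)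
    rw [Complex.volume_closedBall]
    exact ENNReal.mul_ne_top (by simp) ENNReal.coe_ne_top
  set v : ℝ := (volume S).toReal with hv
  have hv0 : 0 ≤ v := ENNReal.toReal_nonneg
  have hvS : volume S = ENNReal.ofReal v := (ENNReal.ofReal_toReal hSfin).symm
  set ρ : ℝ := Real.sqrt (2 * v / Real.pi) with hρdef
  have hρ0 : 0 ≤ ρ := Real.sqrt_nonneg _
  have hρsq : ρ ^ 2 = 2 * v / Real.pi := Real.sq_sqrt (by positivity)
  set D : Set ℂ := ball (0:ℂ) ρ ∩ {z : ℂ | 0 < z.im} with hD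
  have hDmeas : MeasurableSet D :=
    measurableSet_ball.inter (measurableSet_lt measurable_const Complex.measurable_im)
  have hballsymm : ∀ z : ℂ, z ∈ ball (0:ℂ) ρ ↔ -z ∈ ball (0:ℂ) ρ := by
    intro z; simp [Complex.dist_eq]
  -- volume of D
  have hballvol : volume (ball (0:ℂ) ρ) = 2 * volume D := by
    rw [← setLIntegral_one, halve measurableSet_ball hballsymm (fun _ => (1:ENNReal)) (fun _ => rfl), setLIntegral_one]
  have hDvol : volume D = ENNReal.ofReal v := by
    have h1 : volume (ball (0:ℂ) ρ) = ENNReal.ofReal (2 * v) := by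
      rw [Complex.volume_ball, ← ENNReal.ofReal_pow hρ0, hρsq,
        show ((NNReal.pi : ENNReal)) = ENNReal.ofReal Real.pi by
          rw [← NNReal.coe_real_pi, ENNReal.ofReal_coe_nnreal],
        ← ENNReal.ofReal_mul (by positivity)]
      congr 1
      field_simp
    have h2 : (2:ENNReal) * volume D = 2 * ENNReal.ofReal v := by
      rw [← hballvol, h1, ENNReal.ofReal_mul (by norm_num), ENNReal.ofReal_ofNat]
    exact (ENNReal.mul_right_inj (a := 2) (by norm_num) (by norm_num)).1 h2
  -- integral over D
  have hDint : ∫⁻ z in D, ENNReal.ofReal (normSq z) = ENNReal.ofReal (v^2 / Real.pi) := by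
    have h1 := halve measurableSet_ball hballsymm (fun z => ENNReal.ofReal (normSq z))
      (fun z => by simp)
    rw [lintegral_ball_normSq hρ0] at h1
    have h3 : Real.pi * ρ^4 / 2 = 2 * (v^2 / Real.pi) := by
      have : ρ ^ 4 = (ρ ^ 2) ^ 2 := by ring
      rw [this, hρsq]
      field_simp
    rw [h3, ENNReal.ofReal_mul (by norm_num), ENNReal.ofReal_ofNat] at h1
    exact ((ENNReal.mul_right_inj (a := 2) (by norm_num) (by norm_num)).1 h1).symm
  -- symmetrization inequality
  have hdiffeq : volume (S \ D) = volume (D \ S) := by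
    have h1 : volume (S ∩ D) + volume (S \ D) = volume S := measure_inter_add_diff S hDmeas
    have h2 : volume (D ∩ S) + volume (D \ S) = volume D := measure_inter_add_diff D hS
    rw [inter_comm] at h2
    have hfin : volume (S ∩ D) ≠ ⊤ := ne_top_of_le_ne_top hSfin (measure_mono inter_subset_left)
    rw [← ENNReal.add_right_inj hfin, h1, h2, hDvol, hvS]
  have hmain : ∫⁻ z in D, ENNReal.ofReal (normSq z) ≤ ∫⁻ z in S, ENNReal.ofReal (normSq z) := by
    have hlow : ENNReal.ofReal (ρ^2) * volume (S \ D) ≤ ∫⁻ z in S \ D, ENNReal.ofReal (normSq z) := by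
      rw [← setLIntegral_const]
      refine setLIntegral_mono hf ?_
      rintro z ⟨hzS, hzD⟩
      apply ENNReal.ofReal_le_ofReal
      have hzH : 0 < z.im := hSH hzS
      have hzball : z ∉ ball (0:ℂ) ρ := fun h => hzD ⟨h, hzH⟩
      rw [mem_ball, Complex.dist_eq, sub_zero, not_lt] at hzball
      calc ρ^2 ≤ ‖z‖ ^ 2 := pow_le_pow_left₀ hρ0 hzball 2
        _ = normSq z := Complex.sq_norm z
    have hup : ∫⁻ z in D \ S, ENNReal.ofReal (normSq z) ≤ ENNReal.ofReal (ρ^2) * volume (D \ S) := by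
      rw [← setLIntegral_const]
      refine setLIntegral_mono measurable_const ?_
      rintro z ⟨hzD, _⟩
      apply ENNReal.ofReal_le_ofReal
      have hzball : ‖z‖ < ρ := by
        have := hzD.1
        rwa [mem_ball, Complex.dist_eq, sub_zero] at this
      calc normSq z = ‖z‖ ^ 2 := (Complex.sq_norm z).symm
        _ ≤ ρ ^ 2 := pow_le_pow_left₀ (norm_nonneg z) hzball.le 2
    calc ∫⁻ z in D, ENNReal.ofReal (normSq z)
        = (∫⁻ z in D ∩ S, ENNReal.ofReal (normSq z)) + ∫⁻ z in D \ S, ENNReal.ofReal (normSq z) :=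
          (lintegral_inter_add_diff _ _ hS).symm
      _ ≤ (∫⁻ z in S ∩ D, ENNReal.ofReal (normSq z)) + ENNReal.ofReal (ρ^2) * volume (S \ D) := by
          rw [inter_comm, ← hdiffeq] at *
          exact add_le_add_right hup _
      _ ≤ (∫⁻ z in S ∩ D, ENNReal.ofReal (normSq z)) + ∫⁻ z in S \ D, ENNReal.ofReal (normSq z) :=
          add_le_add_right hlow _
      _ = ∫⁻ z in S, ENNReal.ofReal (normSq z) := lintegral_inter_add_diff _ _ hDmeas
  calc volume S ^ 2 = ENNReal.ofReal (v ^ 2) := by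
        rw [hvS, ← ENNReal.ofReal_pow hv0]
    _ = ENNReal.ofReal Real.pi * ENNReal.ofReal (v^2 / Real.pi) := by
        rw [← ENNReal.ofReal_mul Real.pi_pos.le]
        congr 1
        field_simp
    _ = ENNReal.ofReal Real.pi * ∫⁻ z in D, ENNReal.ofReal (normSq z) := by rw [hDint]
    _ ≤ ENNReal.ofReal Real.pi * ∫⁻ z in S, ENNReal.ofReal (normSq z) :=
        mul_le_mul_right hmain _

lemma cov {E : Set ℂ} (hE : MeasurableSet E) :
    volume E = ∫⁻ z in ((fun z : ℂ => z^2) ⁻¹' E) ∩ {z : ℂ | 0 < z.im},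
      ENNReal.ofReal (4 * normSq z) := by
  set f : ℂ → ℂ := fun z => z^2 with hf
  set S : Set ℂ := (f ⁻¹' E) ∩ {z : ℂ | 0 < z.im} with hSdef
  have hSmeas : MeasurableSet S :=
    ((measurable_id.pow_const 2) hE).inter
      (measurableSet_lt measurable_const Complex.measurable_im)
  set f' : ℂ → ℂ →L[ℝ] ℂ :=
    fun z => (ContinuousLinearMap.smulRight (1 : ℂ →L[ℂ] ℂ) (2*z)).restrictScalars ℝ with hf'
  have hderiv : ∀ z ∈ S, HasFDerivWithinAt f (f' z) S z := by
    intro z _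
    have h := (hasDerivAt_pow 2 z).hasFDerivAt
    rw [pow_one] at h
    have : (2:ℂ) * z = (2:ℕ) * z := by norm_num
    rw [hf']
    exact ((this ▸ h).restrictScalars ℝ).hasFDerivWithinAt
  have hinj : InjOn f S := by
    rintro z ⟨_, hz⟩ w ⟨_, hw⟩ hzw
    simp only [mem_setOf_eq] at hz hw
    have h : (z - w) * (z + w) = 0 := by ring_nf; simp only [hf] at hzw; linear_combination hzw
    rcases mul_eq_zero.1 h with h|h
    · exact sub_eq_zero.1 h
    · exfalso
      have hwz : w = -z := eq_neg_of_add_eq_zero_right h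
      rw [hwz] at hw
      simp only [mem_setOf_eq, Complex.neg_im] at hw
      linarith
  have hdet : ∀ z : ℂ, |(f' z).det| = 4 * normSq z := by
    intro z
    have h1 : (f' z).det = LinearMap.det ((f' z) : ℂ →ₗ[ℝ] ℂ) := rfl
    have h2 : ((f' z) : ℂ →ₗ[ℝ] ℂ) = Algebra.lmul ℝ ℂ (2*z) := by
      apply LinearMap.ext
      intro w
      simp [f', mul_comm]
    rw [h1, h2, ← Algebra.norm_apply, Algebra.norm_complex_apply,
      _root_.abs_of_nonneg (normSq_nonneg _), normSq_mul]
    norm_num [Complex.normSq_apply]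
  have himg : volume E = volume (f '' S) := by
    apply le_antisymm
    · calc volume E ≤ volume (f '' S ∪ {w : ℂ | w.im = 0}) := by
            apply measure_mono
            intro w hw
            by_cases him : w.im = 0
            · exact Or.inr him
            · left
              obtain ⟨z, hz⟩ := IsAlgClosed.exists_pow_nat_eq w (n := 2) (by norm_num)
              have hzim : z.im ≠ 0 := by
                intro h0
                apply him
                rw [← hz]
                simp [Complex.sq_norm, pow_two, Complex.mul_im, h0]
              rcases lt_or_gt_of_ne hzim with h|h
              · exact ⟨-z, ⟨by simp [f, hz, hw], by simpa using h⟩, by simp [f, hz]⟩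
              · exact ⟨z, ⟨by simp [f, hz, hw], h⟩, hz⟩
        _ ≤ volume (f '' S) + volume {w : ℂ | w.im = 0} := measure_union_le _ _
        _ = volume (f '' S) := by rw [line_null, add_zero]
    · exact measure_mono ((image_mono inter_subset_left).trans (image_preimage_subset f E))
  rw [himg]
  have := lintegral_image_eq_lintegral_abs_det_fderiv_mul volume hSmeas hderiv hinj (fun _ => 1)
  rw [setLIntegral_one] at this
  rw [this]
  apply setLIntegral_congr_fun hSmeas
  intro z _
  beta_reduce
  rw [mul_one, hdet z]

lemma key_ineq {E : Set ℂ} (hE : MeasurableSet E) (hE1 : E ⊆ closedBall (0:ℂ) 1) :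
    volume ((fun z : ℂ => z ^ 2) ⁻¹' E) ^ 2 ≤ ENNReal.ofReal Real.pi * volume E := by
  set A : Set ℂ := (fun z : ℂ => z ^ 2) ⁻¹' E with hA
  set S : Set ℂ := A ∩ {z : ℂ | 0 < z.im} with hS
  have hf : Measurable (fun z : ℂ => ENNReal.ofReal (normSq z)) :=
    ENNReal.measurable_ofReal.comp Complex.continuous_normSq.measurable
  have hAmeas : MeasurableSet A := (measurable_id.pow_const 2) hE
  have hSmeas : MeasurableSet S :=
    hAmeas.inter (measurableSet_lt measurable_const Complex.measurable_im)
  have hAsymm : ∀ z : ℂ, z ∈ A ↔ -z ∈ A := by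
    intro z
    simp [hA, Set.mem_preimage, neg_sq]
  have hAvol : volume A = 2 * volume S := by
    rw [← setLIntegral_one A, halve hAmeas hAsymm (fun _ => (1:ENNReal)) (fun _ => rfl),
      setLIntegral_one]
  have hSsub : S ⊆ closedBall (0:ℂ) 1 := by
    rintro z ⟨hz1, _⟩
    have h2 : z ^ 2 ∈ E := hz1
    have h3 := hE1 h2
    rw [mem_closedBall, Complex.dist_eq, sub_zero] at h3 ⊢
    rw [norm_pow] at h3
    nlinarith [norm_nonneg z]
  have hbath := bathtub hSmeas inter_subset_right hSsub
  have hcov := cov hE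
  have hlin : ∫⁻ z in S, ENNReal.ofReal (4 * normSq z)
      = 4 * ∫⁻ z in S, ENNReal.ofReal (normSq z) := by
    rw [← lintegral_const_mul _ hf]
    congr 1
    funext z
    rw [ENNReal.ofReal_mul (by norm_num)]
    norm_num
  calc volume A ^ 2 = 4 * volume S ^ 2 := by rw [hAvol, mul_pow]; ring
    _ ≤ 4 * (ENNReal.ofReal Real.pi * ∫⁻ z in S, ENNReal.ofReal (normSq z)) :=
        mul_le_mul_right hbath _
    _ = ENNReal.ofReal Real.pi * ∫⁻ z in S, ENNReal.ofReal (4 * normSq z) := by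
        rw [hlin]; ring
    _ = ENNReal.ofReal Real.pi * volume E := by rw [← hcov]




open MeasureTheory

/-- For every measurable E contained in the closed unit disk, the Euclidean area of the
preimage of E under Φ(z) = z² is at most C·(area E)^{1/2} for a universal constant C;
moreover, for fixed area of E, the area of the preimage is maximized when the preimage
is a Euclidean disk centered at the origin. -/
theorem area_preimage_sq_unit_disk :
    ∃ C : ℝ, 0 < C ∧ ∀ E : Set ℂ, MeasurableSet E → E ⊆ Metric.closedBall (0 : ℂ) 1 →
      (volume ((fun z : ℂ => z ^ 2) ⁻¹' E) ≤
          ENNReal.ofReal (C * (volume E).toReal ^ ((1 : ℝ) / 2))) ∧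
      (∀ r : ℝ, 0 ≤ r → volume E = volume (Metric.ball (0 : ℂ) (r ^ 2)) →
          volume ((fun z : ℂ => z ^ 2) ⁻¹' E) ≤ volume (Metric.ball (0 : ℂ) r)) := by
  refine ⟨Real.sqrt Real.pi, Real.sqrt_pos.2 Real.pi_pos, ?_⟩
  intro E hE hE1
  set A : Set ℂ := (fun z : ℂ => z ^ 2) ⁻¹' E with hA
  have hkey := key_ineq hE hE1
  have hAsub : A ⊆ closedBall (0:ℂ) 1 := by
    intro z hz
    have h3 := hE1 hz
    rw [mem_closedBall, Complex.dist_eq, sub_zero] at h3 ⊢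
    rw [norm_pow] at h3
    nlinarith [norm_nonneg z]
  have hballfin : volume (closedBall (0:ℂ) 1) ≠ ⊤ := by
    rw [Complex.volume_closedBall]
    exact ENNReal.mul_ne_top (by simp) ENNReal.coe_ne_top
  have hAfin : volume A ≠ ⊤ := ne_top_of_le_ne_top hballfin (measure_mono hAsub)
  have hEfin : volume E ≠ ⊤ := ne_top_of_le_ne_top hballfin (measure_mono hE1)
  have hP : ((NNReal.pi : ENNReal)) = ENNReal.ofReal Real.pi := by
    rw [← NNReal.coe_real_pi, ENNReal.ofReal_coe_nnreal]
  constructor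
  · -- part 1
    have h2 : (volume A).toReal ^ 2 ≤ Real.pi * (volume E).toReal := by
      have := ENNReal.toReal_mono (ENNReal.mul_ne_top ENNReal.ofReal_ne_top hEfin) hkey
      rwa [ENNReal.toReal_pow, ENNReal.toReal_mul, ENNReal.toReal_ofReal Real.pi_pos.le] at this
    have h3 : (volume A).toReal ≤ Real.sqrt Real.pi * (volume E).toReal ^ ((1:ℝ)/2) := by
      rw [← Real.sqrt_eq_rpow, ← Real.sqrt_mul Real.pi_pos.le]
      calc (volume A).toReal = Real.sqrt ((volume A).toReal ^ 2) :=
            (Real.sqrt_sq ENNReal.toReal_nonneg).symm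
        _ ≤ Real.sqrt (Real.pi * (volume E).toReal) := Real.sqrt_le_sqrt h2
    calc volume A = ENNReal.ofReal (volume A).toReal := (ENNReal.ofReal_toReal hAfin).symm
      _ ≤ ENNReal.ofReal (Real.sqrt Real.pi * (volume E).toReal ^ ((1:ℝ)/2)) :=
          ENNReal.ofReal_le_ofReal h3
  · -- part 2
    intro r hr hvol
    have hvb : volume (ball (0:ℂ) r) = ENNReal.ofReal r ^ 2 * ENNReal.ofReal Real.pi := by
      rw [Complex.volume_ball, hP]
    have hsq : volume A ^ 2 ≤ (volume (ball (0:ℂ) r)) ^ 2 := by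
      refine hkey.trans (le_of_eq ?_)
      rw [hvol, Complex.volume_ball, hP, hvb]
      rw [show ENNReal.ofReal (r ^ 2) = ENNReal.ofReal r ^ 2 from ENNReal.ofReal_pow hr 2]
      ring
    by_contra hcon
    push_neg at hcon
    have hbfin : volume (ball (0:ℂ) r) ≠ ⊤ := by
      rw [hvb]
      exact ENNReal.mul_ne_top (by simp) ENNReal.ofReal_ne_top
    have : volume (ball (0:ℂ) r) ^ 2 < volume A ^ 2 := by
      rw [pow_two, pow_two]
      exact ENNReal.mul_lt_mul hcon hcon
    exact absurd hsq (not_le.2 this)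
end
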